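/- arXiv:1305.2749 — 2 statements merged into one kernel-verified Lean document; each statement's English description precedes it below -/
import Mathlib

section
/- If a nonzero homogeneous polynomial I of degree m in the coefficients of a general degree-d form in n+1 variables is invariant under the action of SL(n+1), then n+1 divides m·d. -/
/-!
For a primitive `(n+1)`-st root of unity `ζ`, the scalar matrix `ζ • 1` lies in `SL(n+1)` and
multiplies every coefficient of a form of degree `d` by `ζ ^ d`. Since `I` is homogeneous of
degree `m`, this multiplies the value of `I` by `ζ ^ (m * d)`; evaluating the invariance at a
form where `I` does not vanish gives `ζ ^ (m * d) = 1`, i.e. `n + 1 ∣ m * d`.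
-/

open MvPolynomial

namespace MvPolynomial

variable {R σ : Type*} [CommSemiring R]

theorem IsHomogeneous.eval_const_mul {p : MvPolynomial σ R} {m : ℕ} (hp : p.IsHomogeneous m)
    (c : R) (v : σ → R) : eval (fun i => c * v i) p = c ^ m * eval v p := by
  rw [eval_eq, eval_eq, Finset.mul_sum]
  refine Finset.sum_congr rfl fun s hs => ?_
  have hdeg : ∑ i ∈ s.support, s i = m := by
    rw [← Finsupp.degree_apply, Finsupp.degree_eq_weight_one]
    exact hp (mem_support_iff.mp hs)
  simp_rw [mul_pow, Finset.prod_mul_distrib, Finset.prod_pow_eq_pow_sum, hdeg]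
  ring

theorem aeval_C_mul_X_monomial (c : R) (s : σ →₀ ℕ) (a : R) :
    aeval (fun i => C c * X i) (monomial s a) = monomial s (c ^ s.degree * a) := by
  rw [aeval_monomial, Finsupp.prod, monomial_eq, Finsupp.prod]
  simp_rw [mul_pow, Finset.prod_mul_distrib, Finset.prod_pow_eq_pow_sum, ← C_pow, C_mul]
  rw [Finsupp.degree_apply, algebraMap_eq]
  ring

theorem coeff_aeval_C_mul_X (c : R) (F : MvPolynomial σ R) (s : σ →₀ ℕ) :
    coeff s (aeval (fun i => C c * X i) F) = c ^ s.degree * coeff s F := by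
  classical
  induction F using induction_on' with
  | monomial t a =>
    rw [aeval_C_mul_X_monomial, coeff_monomial, coeff_monomial]
    split_ifs with h <;> simp [h]
  | add F G hF hG => simp only [map_add, coeff_add, hF, hG, mul_add]

theorem exists_coeff_eq {P : (σ →₀ ℕ) → Prop} [Finite {s // P s}] (v : {s // P s} → R) :
    ∃ F : MvPolynomial σ R, ∀ s, coeff s.1 F = v s := by
  classical
  have := Fintype.ofFinite {s // P s}
  refine ⟨∑ s, monomial s.1 (v s), fun s => ?_⟩
  simp only [coeff_sum, coeff_monomial, Subtype.val_inj, Finset.sum_ite_eq', Finset.mem_univ,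
    ↓reduceIte]

theorem sum_C_scalar_mul_X {ι : Type*} [Fintype ι] [DecidableEq ι] (c : R) (i : ι) :
    ∑ j, C (Matrix.scalar ι c i j) * X j = (C c * X i : MvPolynomial ι R) := by
  simp only [Matrix.scalar_apply, Matrix.diagonal_apply, apply_ite C, C_0, ite_mul, zero_mul,
    Finset.sum_ite_eq, Finset.mem_univ, ↓reduceIte]

end MvPolynomial

/-- If a nonzero polynomial `I`, homogeneous of degree `m` in the coefficients of a
degree-`d` form in `n+1` variables, is invariant under the `SL(n+1)` action by change
of variables, then `n+1` divides `m * d`. -/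
theorem sl_invariant_implies_dvd (n d m : ℕ)
    (I : MvPolynomial {s : Fin (n + 1) →₀ ℕ // (s.sum fun _ e => e) = d} ℂ)
    (hI : I ≠ 0) (hhom : I.IsHomogeneous m)
    (hinv : ∀ g : Matrix.SpecialLinearGroup (Fin (n + 1)) ℂ,
      ∀ F : MvPolynomial (Fin (n + 1)) ℂ,
        eval (fun s => coeff s.1 ((aeval fun i => ∑ j, C (g.1 i j) * X j) F)) I =
          eval (fun s => coeff s.1 F) I) :
    (n + 1) ∣ m * d := by
  obtain ⟨ζ, hζ⟩ : ∃ ζ : ℂ, IsPrimitiveRoot ζ (n + 1) :=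
    ⟨_, Complex.isPrimitiveRoot_exp _ n.succ_ne_zero⟩
  let g : Matrix.SpecialLinearGroup (Fin (n + 1)) ℂ :=
    ⟨Matrix.scalar _ ζ, by simp [hζ.pow_eq_one]⟩
  obtain ⟨v, hv⟩ : ∃ v, eval v I ≠ 0 := by
    by_contra! h
    exact hI (MvPolynomial.funext fun v => by simp [h v])
  have : Finite {s : Fin (n + 1) →₀ ℕ // (s.sum fun _ e => e) = d} :=
    (Finsupp.finite_of_degree_eq d).to_subtype
  obtain ⟨F, hF⟩ := exists_coeff_eq v
  have hcoeff (s : {s : Fin (n + 1) →₀ ℕ // (s.sum fun _ e => e) = d}) :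
      coeff s.1 ((aeval fun i => ∑ j, C (g.1 i j) * X j) F) = ζ ^ d * v s := by
    simp only [g, sum_C_scalar_mul_X, coeff_aeval_C_mul_X, hF]
    rw [show s.1.degree = d from s.2]
  have key : (ζ ^ d) ^ m * eval v I = eval v I := by
    simpa only [hcoeff, hF, hhom.eval_const_mul] using hinv g F
  have hroot : (ζ ^ d) ^ m = 1 := (mul_eq_right₀ hv).mp key
  rwa [← pow_mul, hζ.pow_eq_one_iff_dvd, mul_comm] at hroot
end

section
/- Hilbert's finiteness theorem: if G is a reductive group acting linearly on a finite-dimensional complex vector space W (so that a Reynolds operator exists, i.e. a G-equivariant projection R : ℂ[W] → ℂ[W]^G that is the identity on ℂ[W]^G and satisfies the Reynolds identity R(fg) = f R(g) for f invariant), then the invariant ring ℂ[W]^G is a finitely generated ℂ-algebra. -/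
open MvPolynomial

/-- The subalgebra of `G`-invariant polynomials. -/
noncomputable def invariantSubalgebra (n : ℕ) {G : Type*} [Group G]
    (φ : G →* MvPolynomial (Fin n) ℂ ≃ₐ[ℂ] MvPolynomial (Fin n) ℂ) :
    Subalgebra ℂ (MvPolynomial (Fin n) ℂ) where
  carrier := {x | ∀ g : G, φ g x = x}
  mul_mem' := fun hx hy g => by simp [map_mul, hx g, hy g]
  add_mem' := fun hx hy g => by simp [map_add, hx g, hy g]
  algebraMap_mem' := fun c g => (φ g).commutes c

/-!
The positive-degree homogeneous invariants generate an ideal of the Noetherian ring `ℂ[W]`, hence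
one generated by finitely many of them, `f₁, …, f_k`; these generate the invariant ring as an
algebra. Indeed, a homogeneous invariant `p` of degree `d > 0` is `∑ fᵢ qᵢ`; applying the Reynolds
operator gives `p = ∑ fᵢ R(qᵢ)` with invariant coefficients, and taking degree-`d` components
replaces them by homogeneous invariants of degree `< d`, to which induction on `d` applies.
-/

namespace MvPolynomial

variable {σ τ R : Type*} [CommRing R]

theorem homogeneousComponent_map_of_isHomogeneous (f : MvPolynomial σ R →ₗ[R] MvPolynomial τ R)
    (hf : ∀ i p, p.IsHomogeneous i → (f p).IsHomogeneous i) (i : ℕ) (q : MvPolynomial σ R) :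
    homogeneousComponent i (f q) = f (homogeneousComponent i q) := by
  induction q using MvPolynomial.induction_on' with
  | monomial d c =>
    have hm : (monomial d c).IsHomogeneous d.degree := isHomogeneous_monomial c rfl
    rw [homogeneousComponent_of_mem (hf _ _ hm), homogeneousComponent_of_mem hm]
    split_ifs <;> simp
  | add p q hp hq => simp only [map_add, hp, hq]

attribute [local instance] MvPolynomial.gradedAlgebra in
theorem IsHomogeneous.homogeneousComponent_mul_of_le {f : MvPolynomial σ R} {e d : ℕ}
    (hf : f.IsHomogeneous e) (hed : e ≤ d) (r : MvPolynomial σ R) :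
    homogeneousComponent d (f * r) = f * homogeneousComponent (d - e) r := by
  rw [← decomposition.decompose'_apply, ← decomposition.decompose'_apply]
  exact DirectSum.coe_decompose_mul_of_left_mem_of_le (homogeneousSubmodule σ R) hf hed

attribute [local instance] MvPolynomial.gradedAlgebra in
theorem IsHomogeneous.homogeneousComponent_mul_of_lt {f : MvPolynomial σ R} {e d : ℕ}
    (hf : f.IsHomogeneous e) (hde : d < e) (r : MvPolynomial σ R) :
    homogeneousComponent d (f * r) = 0 := by
  rw [← decomposition.decompose'_apply]
  exact DirectSum.coe_decompose_mul_of_left_mem_of_not_le (homogeneousSubmodule σ R) hf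
    (not_le.2 hde)

end MvPolynomial

structure IsReynoldsOperator {K A : Type*} [CommRing K] [CommRing A] [Algebra K A]
    (S : Subalgebra K A) (R : A →ₗ[K] A) : Prop where
  apply_mem : ∀ p, R p ∈ S
  apply_of_mem : ∀ p ∈ S, R p = p
  map_mul_left : ∀ p ∈ S, ∀ q, R (p * q) = p * R q

namespace IsReynoldsOperator

variable {K A : Type*} [CommRing K] [CommRing A] [Algebra K A] {S : Subalgebra K A}
  {R : A →ₗ[K] A}

theorem exists_sum_mul_eq (hR : IsReynoldsOperator S R) {T : Finset A} (hT : ↑T ⊆ (S : Set A))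
    {p : A} (hpS : p ∈ S) (hpT : p ∈ Ideal.span (T : Set A)) :
    ∃ r : A → A, (∀ f, r f ∈ S) ∧ p = ∑ f ∈ T, f * r f := by
  obtain ⟨c, -, hc⟩ := Submodule.mem_span_finset.1 hpT
  refine ⟨fun f => R (c f), fun f => hR.apply_mem _, ?_⟩
  calc p = R p := (hR.apply_of_mem p hpS).symm
    _ = ∑ f ∈ T, R (f * c f) := by simp only [← hc, smul_eq_mul, mul_comm, map_sum]
    _ = ∑ f ∈ T, f * R (c f) :=
        Finset.sum_congr rfl fun f hf => hR.map_mul_left f (hT hf) (c f)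

end IsReynoldsOperator

namespace MvPolynomial

variable {σ K : Type*} [CommRing K]

def homogeneousPosDegree (S : Subalgebra K (MvPolynomial σ K)) : Set (MvPolynomial σ K) :=
  {p | p ∈ S ∧ ∃ i, 0 < i ∧ p.IsHomogeneous i}

variable {S : Subalgebra K (MvPolynomial σ K)} {R : MvPolynomial σ K →ₗ[K] MvPolynomial σ K}
  {T : Finset (MvPolynomial σ K)}

theorem IsHomogeneous.mem_adjoin_of_isReynoldsOperator (hR : IsReynoldsOperator S R)
    (hS : ∀ p ∈ S, ∀ i, homogeneousComponent i p ∈ S) (hT : ↑T ⊆ homogeneousPosDegree S)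
    (hspan : homogeneousPosDegree S ⊆ Ideal.span (T : Set (MvPolynomial σ K)))
    {d : ℕ} {p : MvPolynomial σ K} (hp : p.IsHomogeneous d) (hpS : p ∈ S) :
    p ∈ Algebra.adjoin K (T : Set (MvPolynomial σ K)) := by
  induction d using Nat.strong_induction_on generalizing p with
  | _ d ih =>
  rcases Nat.eq_zero_or_pos d with rfl | hd
  · rw [← totalDegree_zero_iff_isHomogeneous, totalDegree_eq_zero_iff_eq_C] at hp
    rw [hp]
    exact Subalgebra.algebraMap_mem _ _
  obtain ⟨r, hrS, hpr⟩ :=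
    hR.exists_sum_mul_eq (fun f hf => (hT hf).1) hpS (hspan ⟨hpS, d, hd, hp⟩)
  rw [← homogeneousComponent_eq_self hp, hpr, map_sum]
  refine Subalgebra.sum_mem _ fun f hf => ?_
  obtain ⟨e, he, hfe⟩ := (hT hf).2
  rcases le_or_gt e d with hed | hde
  · rw [hfe.homogeneousComponent_mul_of_le hed]
    exact Subalgebra.mul_mem _ (Algebra.subset_adjoin hf)
      (ih (d - e) (by omega) (homogeneousComponent_isHomogeneous _ _) (hS _ (hrS f) _))
  · rw [hfe.homogeneousComponent_mul_of_lt hde]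
    exact Subalgebra.zero_mem _

theorem adjoin_eq_of_isReynoldsOperator (hR : IsReynoldsOperator S R)
    (hS : ∀ p ∈ S, ∀ i, homogeneousComponent i p ∈ S) (hT : ↑T ⊆ homogeneousPosDegree S)
    (hspan : homogeneousPosDegree S ⊆ Ideal.span (T : Set (MvPolynomial σ K))) :
    Algebra.adjoin K (T : Set (MvPolynomial σ K)) = S := by
  refine le_antisymm (Algebra.adjoin_le fun f hf => (hT hf).1) fun p hpS => ?_
  rw [← sum_homogeneousComponent p]
  exact Subalgebra.sum_mem _ fun i _ =>
    (homogeneousComponent_isHomogeneous i p).mem_adjoin_of_isReynoldsOperator hR hS hT hspan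
      (hS p hpS i)

theorem fg_of_isReynoldsOperator [Finite σ] [IsNoetherianRing K] (hR : IsReynoldsOperator S R)
    (hS : ∀ p ∈ S, ∀ i, homogeneousComponent i p ∈ S) : S.FG := by
  obtain ⟨T, hT, hspan⟩ := (Submodule.fg_span_iff_fg_span_finset_subset _).1
    (IsNoetherian.noetherian (Ideal.span (homogeneousPosDegree S)))
  exact ⟨T, adjoin_eq_of_isReynoldsOperator hR hS hT fun _ hx => hspan.le (Ideal.subset_span hx)⟩

end MvPolynomial

theorem homogeneousComponent_mem_invariantSubalgebra (n : ℕ) {G : Type*} [Group G]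
    (φ : G →* MvPolynomial (Fin n) ℂ ≃ₐ[ℂ] MvPolynomial (Fin n) ℂ)
    (hgraded : ∀ g : G, ∀ i : ℕ, ∀ p ∈ homogeneousSubmodule (Fin n) ℂ i,
      φ g p ∈ homogeneousSubmodule (Fin n) ℂ i)
    {p : MvPolynomial (Fin n) ℂ} (hp : p ∈ invariantSubalgebra n φ) (i : ℕ) :
    homogeneousComponent i p ∈ invariantSubalgebra n φ := fun g => by
  rw [← AlgEquiv.toLinearMap_apply, ← homogeneousComponent_map_of_isHomogeneous _ (hgraded g),
    AlgEquiv.toLinearMap_apply, hp g]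

/-- Hilbert's finiteness theorem: given a linear, degree-preserving action of a group
`G` on the polynomial ring `ℂ[W]`, together with a Reynolds operator `R` (a projection
onto the invariants satisfying the Reynolds identity), the invariant ring `ℂ[W]^G` is
a finitely generated `ℂ`-algebra. -/
theorem hilbert_finiteness (n : ℕ) {G : Type*} [Group G]
    (φ : G →* MvPolynomial (Fin n) ℂ ≃ₐ[ℂ] MvPolynomial (Fin n) ℂ)
    (hgraded : ∀ g : G, ∀ i : ℕ, ∀ p ∈ homogeneousSubmodule (Fin n) ℂ i,
      φ g p ∈ homogeneousSubmodule (Fin n) ℂ i)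
    (R : MvPolynomial (Fin n) ℂ →ₗ[ℂ] MvPolynomial (Fin n) ℂ)
    (hRrange : ∀ p, ∀ g : G, φ g (R p) = R p)
    (hRid : ∀ p, (∀ g : G, φ g p = p) → R p = p)
    (hReynolds : ∀ p q, (∀ g : G, φ g p = p) → R (p * q) = p * R q) :
    Algebra.FiniteType ℂ (invariantSubalgebra n φ) := by
  have hR : IsReynoldsOperator (invariantSubalgebra n φ) R :=
    ⟨hRrange, hRid, fun p hp q => hReynolds p q hp⟩
  exact (Subalgebra.fg_iff_finiteType _).1 <| fg_of_isReynoldsOperator hR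
    fun _ hp => homogeneousComponent_mem_invariantSubalgebra n φ hgraded hp
end
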